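/- Let U₁, …, U_{N+1} be independent identically distributed real-valued random variables whose common law is atomless (equivalently, has a continuous cumulative distribution function). Then for every k ∈ {1, …, N}, ℙ(U_{N+1} ≤ U_{(k)}) = k/(N+1), where U_{(k)} denotes the k-th order statistic of U₁, …, U_N. -/

import Mathlib

/-!
The joint law of `U 0, …, U N` is the product measure `μ ^ (N + 1)`. It is invariant under
permutations of the coordinates, and since `μ` is atomless it gives measure zero to every tie
`x i = x j`. Almost surely the ranks of the `N + 1` coordinates are therefore a permutation of
`{0, …, N}`, and by exchangeability each coordinate takes each rank with the same probability
`1 / (N + 1)`. Finally, the test point `U (Fin.last N)` is at most the `k`-th order statistic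
of the others exactly when fewer than `k` of them lie strictly below it, i.e. when its rank
is `< k`.
-/

open MeasureTheory

/-- The `k`-th order statistic (the `k`-th smallest value, zero-indexed) of a
finite tuple of values in a linear order. -/
noncomputable def orderStat {α : Type*} [LinearOrder α] {N : ℕ} (k : Fin N) (v : Fin N → α) : α :=
  v (Tuple.sort v k)

open Finset

theorem orderStat_lt_iff {α : Type*} [LinearOrder α] {n : ℕ} (k : Fin n) (v : Fin n → α) (t : α) :
    orderStat k v < t ↔ k < #{i | v i < t} := by
  have hperm : #{i | v (Tuple.sort v i) < t} = #{i | v i < t} :=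
    card_equiv (Tuple.sort v) (by simp)
  rw [← hperm]
  exact (Tuple.lt_card_lt_iff_apply_lt_of_monotone (Tuple.monotone_sort v)).symm

section Rank

variable {ι α : Type*} [Fintype ι] [LinearOrder α]

def rank (x : ι → α) (i : ι) : ℕ := #{j | x j < x i}

theorem rank_comp_perm (x : ι → α) (e : Equiv.Perm ι) (i : ι) :
    rank (x ∘ e) i = rank x (e i) :=
  card_equiv e (by simp)

theorem rank_lt_card (x : ι → α) (i : ι) : rank x i < Fintype.card ι :=
  card_lt_card (filter_ssubset.mpr ⟨i, mem_univ i, lt_irrefl _⟩)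

theorem rank_lt_rank_of_lt {x : ι → α} {i j : ι} (h : x i < x j) : rank x i < rank x j :=
  card_lt_card <| ssubset_iff_of_subset
    (fun k => by simpa using fun hk : x k < x i => hk.trans h) |>.mpr ⟨i, by simp [h]⟩

theorem rank_injective {x : ι → α} (hx : Function.Injective x) : Function.Injective (rank x) := by
  intro i j h
  by_contra hij
  rcases (hx.ne hij).lt_or_gt with hlt | hlt
  · exact (rank_lt_rank_of_lt hlt).ne h
  · exact (rank_lt_rank_of_lt hlt).ne' h

theorem exists_rank_eq {x : ι → α} (hx : Function.Injective x) {m : ℕ}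
    (hm : m < Fintype.card ι) : ∃ i, rank x i = m := by
  have hinj : Function.Injective fun i => (⟨rank x i, rank_lt_card x i⟩ : Fin (Fintype.card ι)) :=
    fun i j h => rank_injective hx (Fin.mk.inj h)
  obtain ⟨i, hi⟩ :=
    ((Fintype.bijective_iff_injective_and_card _).mpr ⟨hinj, by simp⟩).surjective ⟨m, hm⟩
  exact ⟨i, congrArg Fin.val hi⟩

theorem card_castSucc_lt_last_eq_rank {n : ℕ} (x : Fin (n + 1) → α) :
    #{i : Fin n | x i.castSucc < x (Fin.last n)} = rank x (Fin.last n) := by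
  simp only [rank, card_filter, Fin.sum_univ_castSucc, lt_irrefl, if_false, add_zero]

end Rank

namespace MeasureTheory

open ProbabilityTheory

variable {ι α : Type*} [Fintype ι] [MeasurableSpace α]

theorem Measure.prod_diagonal_eq_zero [MeasurableEq α] (μ ν : Measure α) [SFinite ν]
    [NullSingletonClass ν] : μ.prod ν (Set.diagonal α) = 0 := by
  have hslice : ∀ a, Prod.mk a ⁻¹' Set.diagonal α = {a} := fun a => by ext; simp [eq_comm]
  simp [Measure.prod_apply measurableSet_diagonal, hslice]

theorem Measure.pi_setOf_apply_eq_apply [MeasurableEq α] (μ : Measure α) [IsProbabilityMeasure μ]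
    [NullSingletonClass μ] {i j : ι} (hij : i ≠ j) :
    Measure.pi (fun _ => μ) {x | x i = x j} = 0 := by
  have hindep : (fun x : ι → α => x i) ⟂ᵢ[Measure.pi fun _ => μ] fun x => x j :=
    (iIndepFun_pi (X := fun _ => id) fun _ => aemeasurable_id).indepFun hij
  rw [indepFun_iff_map_prod_eq_prod_map_map (measurable_pi_apply i).aemeasurable
    (measurable_pi_apply j).aemeasurable] at hindep
  rw [show {x : ι → α | x i = x j} = (fun x => (x i, x j)) ⁻¹' Set.diagonal α from rfl,
    ← Measure.map_apply ((measurable_pi_apply i).prodMk (measurable_pi_apply j))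
      measurableSet_diagonal,
    hindep, (measurePreserving_eval _ i).map_eq, (measurePreserving_eval _ j).map_eq]
  exact Measure.prod_diagonal_eq_zero μ μ

theorem Measure.ae_pi_injective [MeasurableEq α] (μ : Measure α) [IsProbabilityMeasure μ]
    [NullSingletonClass μ] : ∀ᵐ x ∂Measure.pi (fun _ : ι => μ), Function.Injective x := by
  have hties : ∀ i j, ∀ᵐ x ∂Measure.pi (fun _ : ι => μ), i ≠ j → x i ≠ x j := fun i j => by
    by_cases hij : i = j
    · exact .of_forall fun _ h => absurd hij h
    · filter_upwards [measure_eq_zero_iff_ae_notMem.mp (Measure.pi_setOf_apply_eq_apply μ hij)]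
        with x hx using fun _ => hx
  filter_upwards [ae_all_iff.mpr fun i => ae_all_iff.mpr (hties i)] with x hx i j
  exact not_imp_not.mp (hx i j)

theorem measurePreserving_pi_comp_perm (μ : Measure α) [SigmaFinite μ] (e : Equiv.Perm ι) :
    MeasurePreserving (fun x : ι → α => x ∘ e) (Measure.pi fun _ => μ)
      (Measure.pi fun _ => μ) := by
  convert measurePreserving_piCongrLeft (fun _ : ι => μ) e.symm using 1
  ext x j
  simp [MeasurableEquiv.coe_piCongrLeft, Equiv.piCongrLeft_apply]

variable [LinearOrder α] [TopologicalSpace α] [OrderClosedTopology α] [SecondCountableTopology α]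
  [OpensMeasurableSpace α]

theorem measurable_rank (i : ι) : Measurable fun x : ι → α => rank x i := by
  simp only [rank, card_filter]
  exact Finset.measurable_sum _ fun j _ => Measurable.ite
    (measurableSet_lt (measurable_pi_apply j) (measurable_pi_apply i))
    measurable_const measurable_const

theorem Measure.pi_rank_eq (μ : Measure α) [IsProbabilityMeasure μ] [NullSingletonClass μ]
    (i : ι) {m : ℕ} (hm : m < Fintype.card ι) :
    Measure.pi (fun _ => μ) {x | rank x i = m} = (Fintype.card ι : ENNReal)⁻¹ := by
  classical
  set π := Measure.pi fun _ : ι => μ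
  set T : ι → Set (ι → α) := fun j => {x | rank x j = m}
  have hT : ∀ j, MeasurableSet (T j) := fun j => measurable_rank j (measurableSet_singleton m)
  have hexch : ∀ j, π (T j) = π (T i) := fun j => by
    have hpre : (fun x : ι → α => x ∘ Equiv.swap i j) ⁻¹' T i = T j := by
      ext x
      simp [T, rank_comp_perm]
    rw [← hpre]
    exact (measurePreserving_pi_comp_perm μ _).measure_preimage (hT i).nullMeasurableSet
  have hdisj : Pairwise (Function.onFun (AEDisjoint π) T) := fun j j' hjj' =>
    measure_eq_zero_iff_ae_notMem.mpr <| by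
      filter_upwards [Measure.ae_pi_injective μ] with x hx hxT
      exact hjj' (rank_injective hx (hxT.1.trans hxT.2.symm))
  have hcover : (⋃ j, T j) =ᵐ[π] (Set.univ : Set (ι → α)) := by
    rw [ae_eq_univ, measure_eq_zero_iff_ae_notMem]
    filter_upwards [Measure.ae_pi_injective μ] with x hx hxT
    exact hxT (Set.mem_iUnion.mpr (exists_rank_eq hx hm))
  have hsum : ∑ j, π (T j) = 1 := by
    rw [← tsum_fintype (L := SummationFilter.unconditional _),
      ← measure_iUnion₀ hdisj fun j => (hT j).nullMeasurableSet, measure_congr hcover,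
      measure_univ]
  simp only [hexch, sum_const, card_univ, nsmul_eq_mul] at hsum
  exact ENNReal.eq_inv_of_mul_eq_one_left (by rwa [mul_comm])

theorem Measure.pi_rank_lt_eq (μ : Measure α) [IsProbabilityMeasure μ] [NullSingletonClass μ]
    (i : ι) {k : ℕ} (hk : k ≤ Fintype.card ι) :
    Measure.pi (fun _ => μ) {x | rank x i < k} = k / Fintype.card ι := by
  have hunion : {x : ι → α | rank x i < k} = ⋃ m ∈ range k, {x | rank x i = m} := by
    ext x
    simp
  rw [hunion, measure_biUnion_finset
      (fun m _ m' _ hmm' => Set.disjoint_left.mpr fun x hm hm' => hmm' (hm.symm.trans hm'))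
      fun m _ => measurableSet_eq_fun (measurable_rank i) measurable_const,
    Finset.sum_congr rfl fun m hm => Measure.pi_rank_eq μ i ((mem_range.mp hm).trans_le hk),
    sum_const, card_range, nsmul_eq_mul, div_eq_mul_inv]

end MeasureTheory

/-- Exact conformal coverage in the i.i.d. atomless case: if `U 0, …, U N` are i.i.d. with
common atomless law `μ`, then for every `k ∈ {1, …, N}`,
`ℙ(U test ≤ U_(k)) = k / (N + 1)`, where `U_(k)` is the `k`-th order statistic of the first
`N` samples. -/
theorem conformal_coverage_iid_atomless
    {Ω : Type*} [MeasurableSpace Ω] (ℙ : Measure Ω) [IsProbabilityMeasure ℙ]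
    (N : ℕ)
    (μ : Measure ℝ) [IsProbabilityMeasure μ] (hatomless : ∀ x : ℝ, μ {x} = 0)
    (U : Fin (N + 1) → Ω → ℝ) (hU : ∀ i, Measurable (U i))
    (hlaw : ∀ i, Measure.map (U i) ℙ = μ)
    (hindep : ProbabilityTheory.iIndepFun U ℙ)
    (k : ℕ) (hk1 : 1 ≤ k) (hkN : k ≤ N) :
    ℙ {ω | U (Fin.last N) ω ≤
        orderStat (⟨k - 1, by omega⟩ : Fin N) (fun i : Fin N => U i.castSucc ω)} =
      (k : ENNReal) / ((N : ENNReal) + 1) := by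
  have : NullSingletonClass μ := ⟨hatomless⟩
  have hjoint : ℙ.map (fun ω i => U i ω) = Measure.pi fun _ => μ := by
    rw [hindep.map_fun_eq_pi_map fun i => (hU i).aemeasurable]
    simp only [hlaw]
  have hevent : {ω | U (Fin.last N) ω ≤
        orderStat (⟨k - 1, by omega⟩ : Fin N) (fun i : Fin N => U i.castSucc ω)} =
      (fun ω i => U i ω) ⁻¹' {x | rank x (Fin.last N) < k} := by
    ext ω
    have hrank := card_castSucc_lt_last_eq_rank fun i => U i ω
    beta_reduce at hrank
    rw [Set.mem_ofPred_eq, ← not_lt, orderStat_lt_iff, hrank]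
    simp only [Set.mem_preimage, Set.mem_ofPred_eq]
    omega
  rw [hevent, ← Measure.map_apply (measurable_pi_lambda _ hU)
      (measurableSet_lt (measurable_rank _) measurable_const),
    hjoint, Measure.pi_rank_lt_eq μ _ (by simpa using hkN.trans N.le_succ)]
  simp
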